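/- Let (a_n) be a sequence in [0,2] and define f : [0,2] → [0,2] by f(x) = sup of all finite sums 2^{-n_1} + ⋯ + 2^{-n_k} over finite sets {n_1 < ⋯ < n_k} ⊆ ℕ with max(a_{n_1}, …, a_{n_k}) < x (with f(x) = 0 if no such set exists). Then f is monotone, and for every n, if a_n ≤ f(a_n) then a_n + 2^{-n} ≤ f(a_n + 2^{-n}). -/

import Mathlib

/-!
Write `S x` for the set of sums `∑ n ∈ F, 2^{-n}` over nonempty finite `F` with `a n < x` on `F`,
so that `f x = sSup (S x)`. These sums are bounded by `∑ 2^{-n} = 2` and `S` grows with `x`,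
so `f` is monotone. If `x ≤ a n < y`, then `n` lies in no index set counted in `S x`, so adding
it to any of them turns a sum from `S x` into a sum from `S y`; hence `f x + 2^{-n} ≤ f y`.
With `x = a n` and `y = a n + 2^{-n}` this gives `a n + 2^{-n} ≤ f (a n) + 2^{-n} ≤ f y`.
-/

open Finset

section SumsBelow

variable {ι α : Type*} [LinearOrder α] (a : ι → α) (w : ι → ℝ)

def sumsBelow (x : α) : Set ℝ :=
  {s | ∃ F : Finset ι, F.Nonempty ∧ (∀ i ∈ F, a i < x) ∧ s = ∑ i ∈ F, w i}

variable {a w}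

theorem sumsBelow_mono {x y : α} (hxy : x ≤ y) : sumsBelow a w x ⊆ sumsBelow a w y := by
  rintro s ⟨F, hF, hlt, rfl⟩
  exact ⟨F, hF, fun i hi => (hlt i hi).trans_le hxy, rfl⟩

theorem weight_mem_sumsBelow {i : ι} {y : α} (hi : a i < y) : w i ∈ sumsBelow a w y :=
  ⟨{i}, singleton_nonempty i, by simpa using hi, by simp⟩

theorem add_weight_mem_sumsBelow {s : ℝ} {x y : α} {i : ι} (hs : s ∈ sumsBelow a w x)
    (hxi : x ≤ a i) (hiy : a i < y) : s + w i ∈ sumsBelow a w y := by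
  classical
  obtain ⟨F, hF, hlt, rfl⟩ := hs
  have hiF : i ∉ F := fun hi => (hlt i hi).not_ge hxi
  refine ⟨insert i F, insert_nonempty i F, fun j hj => ?_, by rw [sum_insert hiF, add_comm]⟩
  rcases mem_insert.1 hj with rfl | hj
  · exact hiy
  · exact (hlt j hj).trans (hxi.trans_lt hiy)

theorem bddAbove_sumsBelow (hw : 0 ≤ w) (hsum : Summable w) (x : α) :
    BddAbove (sumsBelow a w x) := by
  refine ⟨∑' i, w i, ?_⟩
  rintro s ⟨F, -, -, rfl⟩
  exact hsum.sum_le_tsum F fun i _ => hw i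

theorem sSup_sumsBelow_nonneg (hw : 0 ≤ w) (x : α) : 0 ≤ sSup (sumsBelow a w x) := by
  apply Real.sSup_nonneg
  rintro s ⟨F, -, -, rfl⟩
  exact sum_nonneg fun i _ => hw i

theorem monotone_sSup_sumsBelow (hw : 0 ≤ w) (hsum : Summable w) :
    Monotone fun x => sSup (sumsBelow a w x) := fun _ y hxy =>
  Real.sSup_le (fun _ hs => le_csSup (bddAbove_sumsBelow hw hsum y) (sumsBelow_mono hxy hs))
    (sSup_sumsBelow_nonneg hw y)

theorem sSup_sumsBelow_add_weight_le (hw : 0 ≤ w) (hsum : Summable w) {x y : α} {i : ι}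
    (hxi : x ≤ a i) (hiy : a i < y) :
    sSup (sumsBelow a w x) + w i ≤ sSup (sumsBelow a w y) := by
  have hbdd := bddAbove_sumsBelow (a := a) hw hsum y
  rw [← le_sub_iff_add_le]
  -- `Real.sSup_le` also covers `sumsBelow a w x = ∅` (junk `sSup ∅ = 0`): the bound is `≥ 0`
  -- because `w i` itself is one of the sums below `y`.
  refine Real.sSup_le (fun s hs => ?_) ?_
  · exact le_sub_iff_add_le.2 (le_csSup hbdd (add_weight_mem_sumsBelow hs hxi hiy))
  · exact sub_nonneg.2 (le_csSup hbdd (weight_mem_sumsBelow hiy))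

end SumsBelow

theorem monotone_and_postfixed_step_general (a : ℕ → ℝ)
    (f : ℝ → ℝ)
    (hf : ∀ x, f x = sSup {s : ℝ | ∃ F : Finset ℕ, F.Nonempty ∧
        (∀ n ∈ F, a n < x) ∧ s = ∑ n ∈ F, (1 / 2 : ℝ) ^ n}) :
    Monotone f ∧
    ∀ n : ℕ, a n ≤ f (a n) →
      a n + (1 / 2 : ℝ) ^ n ≤ f (a n + (1 / 2 : ℝ) ^ n) := by
  obtain rfl : f = fun x => sSup (sumsBelow a (fun n => (1 / 2 : ℝ) ^ n) x) := funext hf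
  have hw : 0 ≤ fun n : ℕ => (1 / 2 : ℝ) ^ n := fun n => by positivity
  refine ⟨monotone_sSup_sumsBelow hw summable_geometric_two, fun n hn => ?_⟩
  have hstep := sSup_sumsBelow_add_weight_le hw summable_geometric_two le_rfl
    (lt_add_of_pos_right (a n) (pow_pos one_half_pos n))
  exact (add_le_add_left hn _).trans hstep

open Finset in
/-- The Knaster–Tarski style map from the proof that order-complete reals are
sequence-avoiding: `f x` is the supremum of the sums `2^{-n₁} + ⋯ + 2^{-nₖ}`
over nonempty finite sets of indices whose terms all lie below `x`
(`0` if there is no such set, via `sSup ∅ = 0`). -/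
theorem monotone_and_postfixed_step (a : ℕ → ℝ) (ha : ∀ n, a n ∈ Set.Icc (0 : ℝ) 2)
    (f : ℝ → ℝ)
    (hf : ∀ x, f x = sSup {s : ℝ | ∃ F : Finset ℕ, F.Nonempty ∧
        (∀ n ∈ F, a n < x) ∧ s = ∑ n ∈ F, (1 / 2 : ℝ) ^ n}) :
    Monotone f ∧
    ∀ n : ℕ, a n ≤ f (a n) →
      a n + (1 / 2 : ℝ) ^ n ≤ f (a n + (1 / 2 : ℝ) ^ n) :=
  monotone_and_postfixed_step_general a f hf
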